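/- Let q₁,...,q₅ ∈ ℤ and suppose that q₁+q₃ and q₂+q₄ are either both positive or both negative. Then q₁+q₂+q₃+q₄ ≠ 0, and for every h ∈ Sp2 one has Σ_{ℓ=1}^5 (|h_{ℓ2}|² + |h_{ℓ4}|²) q_ℓ ≠ 0. -/

import Mathlib

/-!
For `h ∈ Sp2` the quaternionic block structure gives `‖h 2 1‖ = ‖h 0 3‖`,
`‖h 2 3‖ = ‖h 0 1‖`, `‖h 3 1‖ = ‖h 1 3‖`, `‖h 3 3‖ = ‖h 1 1‖`, while row `4` vanishes in
columns `1` and `3`. Hence the weighted sum is `s (q 0 + q 2) + t (q 1 + q 3)` with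
`s = ‖h 0 1‖² + ‖h 0 3‖²` and `t = ‖h 1 1‖² + ‖h 1 3‖²`, and `s + t = 1` because column `1`
of a unitary matrix is a unit vector. A convex combination of two numbers of the same sign is
nonzero.
-/

open Finset

noncomputable section

/-- SU(5): 5×5 special unitary complex matrices. -/
def SU5 : Set (Matrix (Fin 5) (Fin 5) ℂ) :=
  {A | A * A.conjTranspose = 1 ∧ A.det = 1}

/-- The image of the embedding Sp(2) ↪ SU(5). -/
def Sp2 : Set (Matrix (Fin 5) (Fin 5) ℂ) :=
  {h | h ∈ SU5 ∧
    (∀ i : Fin 5, h i 4 = if i = 4 then 1 else 0) ∧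
    (∀ i : Fin 5, h 4 i = if i = 4 then 1 else 0) ∧
    (∀ i j : Fin 5, i < 2 → j < 2 →
      h (i + 2) (j + 2) = (starRingEnd ℂ) (h i j) ∧
      h (i + 2) j = -(starRingEnd ℂ) (h i (j + 2)))}

theorem Matrix.sum_norm_sq_col_eq_one_of_mem_unitaryGroup {𝕜 n : Type*} [RCLike 𝕜] [Fintype n]
    [DecidableEq n] {U : Matrix n n 𝕜} (hU : U ∈ Matrix.unitaryGroup n 𝕜) (j : n) :
    ∑ i, ‖U i j‖ ^ 2 = 1 := by
  have h : (star U * U) j j = (1 : Matrix n n 𝕜) j j := by rw [Unitary.star_mul_self_of_mem hU]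
  simp only [Matrix.star_eq_conjTranspose, Matrix.mul_apply, Matrix.conjTranspose_apply,
    ← starRingEnd_apply, RCLike.conj_mul, Matrix.one_apply_eq] at h
  exact_mod_cast h

theorem mul_add_mul_pos_of_add_eq_one {R : Type*} [Ring R] [LinearOrder R] [IsStrictOrderedRing R]
    {s t x y : R} (hs : 0 ≤ s) (ht : 0 ≤ t) (hst : s + t = 1) (hx : 0 < x) (hy : 0 < y) :
    0 < s * x + t * y := by
  rcases hs.eq_or_lt with rfl | hs
  · rw [zero_add] at hst
    simpa [hst] using hy
  · exact add_pos_of_pos_of_nonneg (mul_pos hs hx) (mul_nonneg ht hy.le)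

theorem mul_add_mul_ne_zero_of_add_eq_one {R : Type*} [Ring R] [LinearOrder R]
    [IsStrictOrderedRing R] {s t x y : R} (hs : 0 ≤ s) (ht : 0 ≤ t) (hst : s + t = 1)
    (hxy : (0 < x ∧ 0 < y) ∨ (x < 0 ∧ y < 0)) : s * x + t * y ≠ 0 := by
  rcases hxy with ⟨hx, hy⟩ | ⟨hx, hy⟩
  · exact (mul_add_mul_pos_of_add_eq_one hs ht hst hx hy).ne'
  · have := mul_add_mul_pos_of_add_eq_one hs ht hst (neg_pos.2 hx) (neg_pos.2 hy)
    rw [mul_neg, mul_neg, ← neg_add] at this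
    exact (neg_pos.1 this).ne

section

variable {h : Matrix (Fin 5) (Fin 5) ℂ}

theorem Sp2.mem_unitaryGroup (hh : h ∈ Sp2) : h ∈ Matrix.unitaryGroup (Fin 5) ℂ :=
  Matrix.mem_unitaryGroup_iff.mpr hh.1.1

theorem Sp2.norm_apply_two_one (hh : h ∈ Sp2) : ‖h 2 1‖ = ‖h 0 3‖ := by
  have e : h 2 1 = -(starRingEnd ℂ) (h 0 3) := (hh.2.2.2 0 1 (by decide) (by decide)).2
  simp [e]

theorem Sp2.norm_apply_two_three (hh : h ∈ Sp2) : ‖h 2 3‖ = ‖h 0 1‖ := by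
  have e : h 2 3 = (starRingEnd ℂ) (h 0 1) := (hh.2.2.2 0 1 (by decide) (by decide)).1
  simp [e]

theorem Sp2.norm_apply_three_one (hh : h ∈ Sp2) : ‖h 3 1‖ = ‖h 1 3‖ := by
  have e : h 3 1 = -(starRingEnd ℂ) (h 1 3) := (hh.2.2.2 1 1 (by decide) (by decide)).2
  simp [e]

theorem Sp2.norm_apply_three_three (hh : h ∈ Sp2) : ‖h 3 3‖ = ‖h 1 1‖ := by
  have e : h 3 3 = (starRingEnd ℂ) (h 1 1) := (hh.2.2.2 1 1 (by decide) (by decide)).1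
  simp [e]

theorem Sp2.apply_four_one (hh : h ∈ Sp2) : h 4 1 = 0 := by simpa using hh.2.2.1 1

theorem Sp2.apply_four_three (hh : h ∈ Sp2) : h 4 3 = 0 := by simpa using hh.2.2.1 3

theorem Sp2.sum_norm_sq_cols_one_three_mul_eq (hh : h ∈ Sp2) (w : Fin 5 → ℝ) :
    ∑ ℓ : Fin 5, (‖h ℓ 1‖ ^ 2 + ‖h ℓ 3‖ ^ 2) * w ℓ =
      (‖h 0 1‖ ^ 2 + ‖h 0 3‖ ^ 2) * (w 0 + w 2) + (‖h 1 1‖ ^ 2 + ‖h 1 3‖ ^ 2) * (w 1 + w 3) := by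
  rw [Fin.sum_univ_five, Sp2.norm_apply_two_one hh, Sp2.norm_apply_two_three hh,
    Sp2.norm_apply_three_one hh, Sp2.norm_apply_three_three hh, Sp2.apply_four_one hh,
    Sp2.apply_four_three hh]
  simp only [norm_zero]
  ring

theorem Sp2.sum_norm_sq_rows_zero_one_cols_one_three_eq_one (hh : h ∈ Sp2) :
    (‖h 0 1‖ ^ 2 + ‖h 0 3‖ ^ 2) + (‖h 1 1‖ ^ 2 + ‖h 1 3‖ ^ 2) = 1 := by
  have := Matrix.sum_norm_sq_col_eq_one_of_mem_unitaryGroup (Sp2.mem_unitaryGroup hh) 1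
  rw [Fin.sum_univ_five, Sp2.norm_apply_two_one hh, Sp2.norm_apply_three_one hh,
    Sp2.apply_four_one hh] at this
  simp only [norm_zero] at this
  linarith

end

theorem stmt1 (q : Fin 5 → ℤ)
    (hq : (0 < q 0 + q 2 ∧ 0 < q 1 + q 3) ∨ (q 0 + q 2 < 0 ∧ q 1 + q 3 < 0)) :
    q 0 + q 1 + q 2 + q 3 ≠ 0 ∧
    ∀ h ∈ Sp2,
      ∑ ℓ : Fin 5, (‖h ℓ 1‖ ^ 2 + ‖h ℓ 3‖ ^ 2) * (q ℓ : ℝ) ≠ 0 := by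
  refine ⟨by omega, fun h hh => ?_⟩
  rw [Sp2.sum_norm_sq_cols_one_three_mul_eq hh]
  refine mul_add_mul_ne_zero_of_add_eq_one (by positivity) (by positivity)
    (Sp2.sum_norm_sq_rows_zero_one_cols_one_three_eq_one hh) ?_
  exact_mod_cast hq
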